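/- Let 1 ≤ u ≤ 2 with conjugate exponent u' (1/u + 1/u' = 1), and let E be a u-convex and u'-concave symmetric Banach sequence space. Then there is c > 0 with c^{-1} · n^{1/u}/‖Σ_{i=1}^n e_i‖_{E_n} ≤ ‖id: E_n → ℓ_u^n‖ ≤ c · n^{1/u}/‖Σ_{i=1}^n e_i‖_{E_n} for all n. If moreover E is 2-concave, then also ‖id: E_n → ℓ_u^n‖ ≍ n^{1/u − 1/2}/‖id: ℓ_2^n → E_n‖, i.e. there is c' > 0 with c'^{-1} · n^{1/u−1/2}/‖id: ℓ_2^n → E_n‖ ≤ ‖id: E_n → ℓ_u^n‖ ≤ c' · n^{1/u−1/2}/‖id: ℓ_2^n → E_n‖ for all n. -/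

import Mathlib

open scoped ENNReal NNReal BigOperators
open Filter

noncomputable section

/-- The ℓ^r-"sum" `(∑ |v i|^r)^(1/r)` of finitely many reals, with the
supremum `sup_i |v i|` for `r = ∞`. -/
def lpsum (r : ℝ≥0∞) {m : ℕ} (v : Fin m → ℝ) : ℝ :=
  if r = ∞ then ⨆ i, |v i| else (∑ i, |v i| ^ r.toReal) ^ (1 / r.toReal)

/-- The norm of `ℓ_u^n = (ℂ^n, ‖·‖_u)` (max-norm for `u = ∞`). -/
def lunorm (u : ℝ≥0∞) {n : ℕ} (x : Fin n → ℂ) : ℝ :=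
  lpsum u fun i => ‖x i‖

/-- Dual norm of a linear functional with respect to a given norm function. -/
def dualNorm {X : Type*} [AddCommGroup X] [Module ℂ X] (NX : X → ℝ) (f : X →ₗ[ℂ] ℂ) : ℝ :=
  sSup {t | ∃ x, NX x ≤ 1 ∧ t = ‖f x‖}

/-- Operator norm of a linear map with respect to given norm functions. -/
def opNorm {X Y : Type*} [AddCommGroup X] [Module ℂ X] [AddCommGroup Y] [Module ℂ Y]
    (NX : X → ℝ) (NY : Y → ℝ) (T : X →ₗ[ℂ] Y) : ℝ :=
  sSup {t | ∃ x, NX x ≤ 1 ∧ t = NY (T x)}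

/-- The weak-ℓ₂ norm `sup_{‖x'‖ ≤ 1} (∑_j |⟨x', x_j⟩|²)^{1/2}` of a finite family. -/
def weak2 {X : Type*} [AddCommGroup X] [Module ℂ X] (NX : X → ℝ) {m : ℕ}
    (x : Fin m → X) : ℝ :=
  sSup {t | ∃ f : X →ₗ[ℂ] ℂ, dualNorm NX f ≤ 1 ∧ t = lpsum 2 fun j => ‖f (x j)‖}

/-- The (r,2)-summing norm `π_{r,2}(T)`: the least `ρ ≥ 0` such that
`(∑ ‖T x_i‖^r)^{1/r} ≤ ρ · sup_{‖x'‖ ≤ 1} (∑ |⟨x', x_i⟩|²)^{1/2}`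
for all finite families, with sup-modification for `r = ∞`. -/
def summingNorm (r : ℝ≥0∞) {X Y : Type*} [AddCommGroup X] [Module ℂ X]
    [AddCommGroup Y] [Module ℂ Y] (NX : X → ℝ) (NY : Y → ℝ) (T : X →ₗ[ℂ] Y) : ℝ :=
  sInf {ρ | 0 ≤ ρ ∧ ∀ (m : ℕ) (x : Fin m → X),
    lpsum r (fun i => NY (T (x i))) ≤ ρ * weak2 NX x}

/-- The (s,2)-mixing norm `μ_{s,2}(T)`: the least `c ≥ 0` such that
`(∑_j (∑_i |⟨y'_i, T x_j⟩|^s)^{2/s})^{1/2} ≤ c · (∑_i ‖y'_i‖^s)^{1/s} ·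
 sup_{‖x'‖ ≤ 1} (∑_j |⟨x', x_j⟩|²)^{1/2}` for all finite families, with
sup-modification for `s = ∞`. -/
def mixingNorm (s : ℝ≥0∞) {X Y : Type*} [AddCommGroup X] [Module ℂ X]
    [AddCommGroup Y] [Module ℂ Y] (NX : X → ℝ) (NY : Y → ℝ) (T : X →ₗ[ℂ] Y) : ℝ :=
  sInf {c | 0 ≤ c ∧ ∀ (k m : ℕ) (y : Fin k → (Y →ₗ[ℂ] ℂ)) (x : Fin m → X),
    lpsum 2 (fun j => lpsum s fun i => ‖(y i) (T (x j))‖) ≤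
      c * lpsum s (fun i => dualNorm NY (y i)) * weak2 NX x}

/-- The infinite-dimensional complex Hilbert sequence space ℓ₂. -/
abbrev ellTwo : Type := lp (fun _ : ℕ => ℂ) 2

/-- The k-th approximation number `a_k(T) = inf{‖T - R‖ : rank R < k}`. -/
def approxNum {X Y : Type*} [AddCommGroup X] [Module ℂ X] [AddCommGroup Y] [Module ℂ Y]
    (NX : X → ℝ) (NY : Y → ℝ) (k : ℕ) (T : X →ₗ[ℂ] Y) : ℝ :=
  sInf {t | ∃ R : X →ₗ[ℂ] Y, Module.rank ℂ (LinearMap.range R) < (k : Cardinal) ∧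
    t = opNorm NX NY (T - R)}

/-- The k-th Weyl number `x_k(T) = sup{a_k(T S) : S ∈ L(ℓ₂, X), ‖S‖ ≤ 1}`. -/
def weylNum {X Y : Type*} [AddCommGroup X] [Module ℂ X] [AddCommGroup Y] [Module ℂ Y]
    (NX : X → ℝ) (NY : Y → ℝ) (k : ℕ) (T : X →ₗ[ℂ] Y) : ℝ :=
  sSup {t | ∃ S : ellTwo →ₗ[ℂ] X, opNorm (fun z => ‖z‖) NX S ≤ 1 ∧
    t = approxNum (fun z => ‖z‖) NY k (T ∘ₗ S)}

/-- The singular values of a complex n×n matrix. -/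
def singularValues {n : ℕ} (A : Matrix (Fin n) (Fin n) ℂ) : Fin n → ℝ := fun i =>
  Real.sqrt ((Matrix.isHermitian_conjTranspose_mul_self A).eigenvalues i)

/-- The Schatten-u norm `‖A‖_{S_u^n} = (∑ s_i(A)^u)^{1/u}` (operator norm for u = ∞). -/
def schattenNorm (u : ℝ≥0∞) {n : ℕ} (A : Matrix (Fin n) (Fin n) ℂ) : ℝ :=
  lpsum u (singularValues A)

/-- A symmetric Banach sequence space: a Banach space `E ⊆ c₀` of complex sequences
in which the standard unit vectors form a symmetric (Schauder) basis. -/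
structure SymmSeqSpace where
  /-- membership in E -/
  Mem : (ℕ → ℂ) → Prop
  /-- the norm of E -/
  nrm : (ℕ → ℂ) → ℝ
  zero_mem : Mem 0
  add_mem : ∀ {x y}, Mem x → Mem y → Mem (x + y)
  smul_mem : ∀ (c : ℂ) {x}, Mem x → Mem (c • x)
  /-- E ⊆ c₀ -/
  tendsto_zero : ∀ {x}, Mem x → Filter.Tendsto x Filter.atTop (nhds 0)
  nrm_nonneg : ∀ x, 0 ≤ nrm x
  nrm_eq_zero : ∀ {x}, Mem x → (nrm x = 0 ↔ x = 0)
  nrm_add_le : ∀ {x y}, Mem x → Mem y → nrm (x + y) ≤ nrm x + nrm y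
  nrm_smul : ∀ (c : ℂ) (x), nrm (c • x) = ‖c‖ * nrm x
  /-- the unit vectors belong to E -/
  unit_mem : ∀ i : ℕ, Mem (Pi.single i 1)
  /-- symmetry of the basis: permutations and unimodular sign changes are isometric -/
  symm_mem : ∀ {x} (π : Equiv.Perm ℕ) (ε : ℕ → ℂ), (∀ i, ‖ε i‖ = 1) → Mem x →
    Mem (fun i => ε i * x (π i))
  symm : ∀ (x : ℕ → ℂ) (π : Equiv.Perm ℕ) (ε : ℕ → ℂ), (∀ i, ‖ε i‖ = 1) →
    nrm (fun i => ε i * x (π i)) = nrm x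
  /-- the unit vectors form a Schauder basis: finite sections converge -/
  basis : ∀ {x}, Mem x → Filter.Tendsto
    (fun n => nrm (x - fun i => if i < n then x i else 0)) Filter.atTop (nhds 0)
  /-- completeness -/
  complete : ∀ f : ℕ → (ℕ → ℂ), (∀ k, Mem (f k)) →
    (∀ ε > (0:ℝ), ∃ N, ∀ p q, N ≤ p → N ≤ q → nrm (f p - f q) < ε) →
    ∃ x, Mem x ∧ Filter.Tendsto (fun k => nrm (f k - x)) Filter.atTop (nhds 0)

/-- The norm of the n-th section `E_n = span{e_1,…,e_n}` of E, as a norm on ℂ^n. -/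
def SymmSeqSpace.nrmFin (E : SymmSeqSpace) {n : ℕ} (x : Fin n → ℂ) : ℝ :=
  E.nrm fun i => if h : i < n then x ⟨i, h⟩ else 0

/-- The unitary-ideal norm `‖A‖_{S_E^n} = ‖(s_i(A))‖_{E_n}`. -/
def SymmSeqSpace.schatten (E : SymmSeqSpace) {n : ℕ} (A : Matrix (Fin n) (Fin n) ℂ) : ℝ :=
  E.nrmFin fun i => ((singularValues A i : ℝ) : ℂ)

/-- p-convexity of a symmetric Banach sequence space (`p = ∞` allowed). -/
def pConvex (E : SymmSeqSpace) (p : ℝ≥0∞) : Prop :=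
  ∃ M > (0:ℝ), ∀ (m : ℕ) (x : Fin m → (ℕ → ℂ)), (∀ i, E.Mem (x i)) →
    E.nrm (fun j => ((lpsum p fun i => ‖x i j‖ : ℝ) : ℂ)) ≤ M * lpsum p fun i => E.nrm (x i)

/-- q-concavity of a symmetric Banach sequence space (`q = ∞` allowed). -/
def qConcave (E : SymmSeqSpace) (q : ℝ≥0∞) : Prop :=
  ∃ M > (0:ℝ), ∀ (m : ℕ) (x : Fin m → (ℕ → ℂ)), (∀ i, E.Mem (x i)) →
    lpsum q (fun i => E.nrm (x i)) ≤ M * E.nrm (fun j => ((lpsum q fun i => ‖x i j‖ : ℝ) : ℂ))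

/-- The complexification of a real n×n matrix, acting linearly on ℂ^n. -/
def mapC {n : ℕ} (g : Matrix (Fin n) (Fin n) ℝ) : (Fin n → ℂ) →ₗ[ℂ] (Fin n → ℂ) :=
  (g.map (Complex.ofReal)).mulVecLin

/-- `N` is a norm on ℂ^n. -/
def IsNorm {n : ℕ} (N : (Fin n → ℂ) → ℝ) : Prop :=
  (∀ x, N x = 0 ↔ x = 0) ∧ (∀ (c : ℂ) x, N (c • x) = ‖c‖ * N x) ∧
    ∀ x y, N (x + y) ≤ N x + N y

/-- `(ℂ^n, N)` has enough symmetries in the orthogonal group O(n): there is a compact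
subgroup `G ⊆ O(n)` acting isometrically on `L(ℂ^n, N)` by left and right composition
such that every operator commuting with `G` is a multiple of the identity. -/
def HasEnoughSymmetries {n : ℕ} (N : (Fin n → ℂ) → ℝ) : Prop :=
  ∃ G : Set (Matrix (Fin n) (Fin n) ℝ),
    (∀ g ∈ G, g * g.transpose = 1 ∧ g.transpose * g = 1) ∧
    (1 : Matrix (Fin n) (Fin n) ℝ) ∈ G ∧
    (∀ g ∈ G, ∀ g' ∈ G, g * g' ∈ G) ∧ (∀ g ∈ G, g.transpose ∈ G) ∧
    IsCompact G ∧
    (∀ u : (Fin n → ℂ) →ₗ[ℂ] (Fin n → ℂ), ∀ g ∈ G, ∀ g' ∈ G,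
      opNorm N N (mapC g ∘ₗ u ∘ₗ mapC g') = opNorm N N u) ∧
    (∀ u : (Fin n → ℂ) →ₗ[ℂ] (Fin n → ℂ),
      (∀ g ∈ G, u ∘ₗ mapC g = mapC g ∘ₗ u) → ∃ c : ℂ, u = c • LinearMap.id)

end

noncomputable section

/-!
Apply convexity or concavity to the `n` cyclic shifts of `x ∈ E_n`: each shift has the
`E`-norm of `x`, while their pointwise `ℓ_p`-sum is `‖x‖_p · (1,…,1)`. Hence `p`-convexity gives
`‖x‖_p ‖∑ e_i‖_E ≤ M n^{1/p} ‖x‖_E` and `q`-concavity gives `n^{1/q} ‖x‖_E ≤ M ‖x‖_q ‖∑ e_i‖_E`;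
the constant vectors show that both are sharp up to `M`. For `q = 2` the second estimate says
`‖id : ℓ_2^n → E_n‖ ≍ ‖∑ e_i‖_E / n^{1/2}`, which converts `n^{1/u} / ‖∑ e_i‖_E` into
`n^{1/u - 1/2} / ‖id : ℓ_2^n → E_n‖`.
-/

section lpsum

variable {m : ℕ}

theorem lpsum_nonneg (p : ℝ≥0∞) (v : Fin m → ℝ) : 0 ≤ lpsum p v := by
  unfold lpsum
  split_ifs
  · exact Real.iSup_nonneg fun i => abs_nonneg (v i)
  · exact Real.rpow_nonneg (Finset.sum_nonneg fun i _ => Real.rpow_nonneg (abs_nonneg _) _) _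

theorem lpsum_comp_perm (p : ℝ≥0∞) (v : Fin m → ℝ) (σ : Equiv.Perm (Fin m)) :
    lpsum p (v ∘ σ) = lpsum p v := by
  unfold lpsum
  split_ifs
  · exact σ.iSup_comp (g := fun i => |v i|)
  · rw [Function.comp_def, Equiv.sum_comp σ fun i => |v i| ^ p.toReal]

theorem lpsum_const {p : ℝ≥0∞} (hp : 0 < p.toReal) {a : ℝ} (ha : 0 ≤ a) :
    lpsum p (fun _ : Fin m => a) = (m : ℝ) ^ (1 / p.toReal) * a := by
  rw [lpsum, if_neg (ENNReal.toReal_pos_iff.1 hp).2.ne, Finset.sum_const, Finset.card_univ,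
    Fintype.card_fin, nsmul_eq_mul, Real.mul_rpow (by positivity) (by positivity),
    abs_of_nonneg ha, ← Real.rpow_mul ha, mul_one_div, div_self hp.ne', Real.rpow_one]

theorem lunorm_nonneg (p : ℝ≥0∞) (x : Fin m → ℂ) : 0 ≤ lunorm p x := lpsum_nonneg p _

theorem lunorm_const {p : ℝ≥0∞} (hp : 0 < p.toReal) (c : ℂ) :
    lunorm p (fun _ : Fin m => c) = (m : ℝ) ^ (1 / p.toReal) * ‖c‖ :=
  lpsum_const hp (norm_nonneg c)

end lpsum

def zeroExtend {n : ℕ} (x : Fin n → ℂ) : ℕ → ℂ := fun i => if h : i < n then x ⟨i, h⟩ else 0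

section zeroExtend

variable {n : ℕ}

theorem zeroExtend_smul (c : ℂ) (x : Fin n → ℂ) : zeroExtend (c • x) = c • zeroExtend x := by
  funext i
  by_cases hi : i < n <;> simp [zeroExtend, hi]

theorem zeroExtend_eq_sum_single (x : Fin n → ℂ) :
    zeroExtend x = ∑ i : Fin n, x i • (Pi.single (i : ℕ) 1 : ℕ → ℂ) := by
  funext k
  simp only [zeroExtend, Finset.sum_apply, Pi.smul_apply, Pi.single_apply, smul_eq_mul,
    mul_ite, mul_one, mul_zero]
  by_cases hk : k < n
  · rw [dif_pos hk, Fintype.sum_eq_single ⟨k, hk⟩ fun i hi => if_neg fun h => hi (Fin.ext h.symm),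
      if_pos rfl]
  · rw [dif_neg hk]
    exact (Finset.sum_eq_zero fun i _ => if_neg (by have := i.is_lt; omega)).symm

theorem zeroExtend_comp_perm (x : Fin n → ℂ) (σ : Equiv.Perm (Fin n)) :
    zeroExtend (x ∘ σ) = zeroExtend x ∘ σ.extendDomain Fin.equivSubtype := by
  funext i
  by_cases hi : i < n
  · rw [Function.comp_apply, Equiv.Perm.extendDomain_apply_subtype σ Fin.equivSubtype hi]
    simp [zeroExtend, hi, Fin.equivSubtype]
  · simp [zeroExtend, hi, Equiv.Perm.extendDomain_apply_not_subtype σ Fin.equivSubtype hi]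

theorem lpsum_norm_zeroExtend_shifts [NeZero n] {p : ℝ≥0∞} (hp : 0 < p.toReal)
    (x : Fin n → ℂ) :
    (fun j => ((lpsum p fun i => ‖zeroExtend (x ∘ Equiv.addRight i) j‖ : ℝ) : ℂ)) =
      (lunorm p x : ℂ) • zeroExtend (fun _ : Fin n => (1 : ℂ)) := by
  funext j
  by_cases hj : j < n
  · have := lpsum_comp_perm p (fun i => ‖x i‖) (Equiv.addLeft ⟨j, hj⟩)
    simp_all [zeroExtend, lunorm, Function.comp_def]
  · simp [zeroExtend, hj, lpsum_const hp le_rfl]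

end zeroExtend

namespace SymmSeqSpace

variable (E : SymmSeqSpace) {n : ℕ}

theorem nrmFin_eq_nrm_zeroExtend (x : Fin n → ℂ) : E.nrmFin x = E.nrm (zeroExtend x) := rfl

theorem mem_zeroExtend (x : Fin n → ℂ) : E.Mem (zeroExtend x) := by
  rw [zeroExtend_eq_sum_single]
  exact Finset.sum_induction _ E.Mem (fun _ _ => E.add_mem) E.zero_mem
    fun i _ => E.smul_mem _ (E.unit_mem i)

theorem nrmFin_comp_perm (x : Fin n → ℂ) (σ : Equiv.Perm (Fin n)) :
    E.nrmFin (x ∘ σ) = E.nrmFin x := by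
  rw [nrmFin_eq_nrm_zeroExtend, nrmFin_eq_nrm_zeroExtend, zeroExtend_comp_perm]
  have := E.symm (zeroExtend x) (σ.extendDomain Fin.equivSubtype) 1 fun _ => norm_one
  simp only [Pi.one_apply, one_mul] at this
  exact this

theorem nrmFin_const (c : ℂ) :
    E.nrmFin (fun _ : Fin n => c) = ‖c‖ * E.nrmFin (fun _ : Fin n => (1 : ℂ)) := by
  rw [nrmFin_eq_nrm_zeroExtend, nrmFin_eq_nrm_zeroExtend, ← E.nrm_smul, ← zeroExtend_smul]
  simp [Pi.smul_def]

theorem nrmFin_one_pos (hn : 0 < n) : 0 < E.nrmFin (fun _ : Fin n => (1 : ℂ)) := by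
  rw [nrmFin_eq_nrm_zeroExtend]
  refine (E.nrm_nonneg _).lt_of_ne' fun h => ?_
  have := congrFun ((E.nrm_eq_zero (E.mem_zeroExtend _)).1 h) 0
  simp [zeroExtend, hn] at this

theorem nrm_lpsum_shifts [NeZero n] {p : ℝ≥0∞} (hp : 0 < p.toReal) (x : Fin n → ℂ) :
    E.nrm (fun j => ((lpsum p fun i => ‖zeroExtend (x ∘ Equiv.addRight i) j‖ : ℝ) : ℂ)) =
      lunorm p x * E.nrmFin (fun _ : Fin n => (1 : ℂ)) := by
  rw [lpsum_norm_zeroExtend_shifts hp, E.nrm_smul, Complex.norm_real,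
    Real.norm_of_nonneg (lunorm_nonneg _ _), nrmFin_eq_nrm_zeroExtend]

theorem lpsum_nrm_shifts [NeZero n] {p : ℝ≥0∞} (hp : 0 < p.toReal) (x : Fin n → ℂ) :
    lpsum p (fun i => E.nrm (zeroExtend (x ∘ Equiv.addRight i))) =
      (n : ℝ) ^ (1 / p.toReal) * E.nrmFin x := by
  simp only [← nrmFin_eq_nrm_zeroExtend, nrmFin_comp_perm]
  exact lpsum_const hp (E.nrm_nonneg _)

end SymmSeqSpace

theorem pConvex.exists_lunorm_mul_le {E : SymmSeqSpace} {p : ℝ≥0∞} (h : pConvex E p)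
    (hp : 0 < p.toReal) :
    ∃ M > 0, ∀ {n : ℕ} [NeZero n] (x : Fin n → ℂ),
      lunorm p x * E.nrmFin (fun _ : Fin n => (1 : ℂ)) ≤
        M * (n : ℝ) ^ (1 / p.toReal) * E.nrmFin x := by
  obtain ⟨M, hM, hconv⟩ := h
  refine ⟨M, hM, fun {n} _ x => ?_⟩
  have := hconv n (fun i => zeroExtend (x ∘ Equiv.addRight i)) fun i => E.mem_zeroExtend _
  rwa [E.nrm_lpsum_shifts hp, E.lpsum_nrm_shifts hp, ← mul_assoc] at this

theorem qConcave.exists_nrmFin_mul_le {E : SymmSeqSpace} {q : ℝ≥0∞} (h : qConcave E q)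
    (hq : 0 < q.toReal) :
    ∃ M > 0, ∀ {n : ℕ} [NeZero n] (x : Fin n → ℂ),
      E.nrmFin x * (n : ℝ) ^ (1 / q.toReal) ≤
        M * E.nrmFin (fun _ : Fin n => (1 : ℂ)) * lunorm q x := by
  obtain ⟨M, hM, hconc⟩ := h
  refine ⟨M, hM, fun {n} _ x => ?_⟩
  have := hconc n (fun i => zeroExtend (x ∘ Equiv.addRight i)) fun i => E.mem_zeroExtend _
  rwa [E.nrm_lpsum_shifts hq, E.lpsum_nrm_shifts hq, mul_comm ((n : ℝ) ^ _),
    mul_comm (lunorm q x), ← mul_assoc] at this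

section opNorm

variable {X Y : Type*} [AddCommGroup X] [Module ℂ X] [AddCommGroup Y] [Module ℂ Y]
  {NX : X → ℝ} {NY : Y → ℝ} {T : X →ₗ[ℂ] Y} {a b : ℝ}

theorem le_div_of_mul_le_of_le_one (ha : 0 < a) (hb : 0 ≤ b)
    (h : ∀ x, NY (T x) * a ≤ b * NX x) {x : X} (hx : NX x ≤ 1) : NY (T x) ≤ b / a :=
  (le_div_iff₀ ha).2 ((h x).trans (mul_le_of_le_one_right hb hx))

theorem opNorm_le_div (ha : 0 < a) (hb : 0 ≤ b) (h : ∀ x, NY (T x) * a ≤ b * NX x)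
    (hX : ∃ x, NX x ≤ 1) : opNorm NX NY T ≤ b / a := by
  obtain ⟨x₀, hx₀⟩ := hX
  refine csSup_le ⟨_, x₀, hx₀, rfl⟩ ?_
  rintro t ⟨x, hx, rfl⟩
  exact le_div_of_mul_le_of_le_one ha hb h hx

theorem le_opNorm (ha : 0 < a) (hb : 0 ≤ b) (h : ∀ x, NY (T x) * a ≤ b * NX x)
    {x : X} (hx : NX x ≤ 1) : NY (T x) ≤ opNorm NX NY T := by
  refine le_csSup ⟨b / a, ?_⟩ ⟨x, hx, rfl⟩
  rintro t ⟨y, hy, rfl⟩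
  exact le_div_of_mul_le_of_le_one ha hb h hy

end opNorm

theorem pConvex.exists_opNorm_nrmFin_lunorm_bounds {E : SymmSeqSpace} {p : ℝ≥0∞}
    (h : pConvex E p) (hp : 0 < p.toReal) :
    ∃ M > 0, ∀ n : ℕ, 0 < n →
      (n : ℝ) ^ (1 / p.toReal) / E.nrmFin (fun _ : Fin n => (1 : ℂ)) ≤
        opNorm (E.nrmFin (n := n)) (lunorm p) LinearMap.id ∧
      opNorm (E.nrmFin (n := n)) (lunorm p) LinearMap.id ≤
        M * ((n : ℝ) ^ (1 / p.toReal) / E.nrmFin (fun _ : Fin n => (1 : ℂ))) := by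
  obtain ⟨M, hM, hle⟩ := h.exists_lunorm_mul_le hp
  refine ⟨M, hM, fun n hn => ?_⟩
  have : NeZero n := ⟨hn.ne'⟩
  set e := E.nrmFin (fun _ : Fin n => (1 : ℂ))
  have he : 0 < e := E.nrmFin_one_pos hn
  have hb : 0 ≤ M * (n : ℝ) ^ (1 / p.toReal) := by positivity
  have hx₀ : E.nrmFin (fun _ : Fin n => ((e⁻¹ : ℝ) : ℂ)) = 1 := by
    rw [E.nrmFin_const, Complex.norm_real, Real.norm_of_nonneg (inv_nonneg.2 he.le),
      inv_mul_cancel₀ he.ne']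
  constructor
  · have := le_opNorm (T := LinearMap.id) he hb (fun x => hle x) hx₀.le
    rwa [LinearMap.id_apply, lunorm_const hp, Complex.norm_real,
      Real.norm_of_nonneg (inv_nonneg.2 he.le), ← div_eq_mul_inv] at this
  · rw [← mul_div_assoc]
    exact opNorm_le_div he hb (fun x => hle x) ⟨_, hx₀.le⟩

theorem qConcave.exists_opNorm_lunorm_nrmFin_bounds {E : SymmSeqSpace} {q : ℝ≥0∞}
    (h : qConcave E q) (hq : 0 < q.toReal) :
    ∃ M > 0, ∀ n : ℕ, 0 < n →
      E.nrmFin (fun _ : Fin n => (1 : ℂ)) / (n : ℝ) ^ (1 / q.toReal) ≤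
        opNorm (lunorm q) (E.nrmFin (n := n)) LinearMap.id ∧
      opNorm (lunorm q) (E.nrmFin (n := n)) LinearMap.id ≤
        M * (E.nrmFin (fun _ : Fin n => (1 : ℂ)) / (n : ℝ) ^ (1 / q.toReal)) := by
  obtain ⟨M, hM, hle⟩ := h.exists_nrmFin_mul_le hq
  refine ⟨M, hM, fun n hn => ?_⟩
  have : NeZero n := ⟨hn.ne'⟩
  set ν := (n : ℝ) ^ (1 / q.toReal)
  have hν : 0 < ν := by positivity
  have hb : 0 ≤ M * E.nrmFin (fun _ : Fin n => (1 : ℂ)) := by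
    have := E.nrmFin_one_pos hn
    positivity
  have hx₀ : lunorm q (fun _ : Fin n => ((ν⁻¹ : ℝ) : ℂ)) = 1 := by
    rw [lunorm_const hq, Complex.norm_real, Real.norm_of_nonneg (inv_nonneg.2 hν.le),
      mul_inv_cancel₀ hν.ne']
  constructor
  · have := le_opNorm (T := LinearMap.id) hν hb (fun x => hle x) hx₀.le
    rwa [LinearMap.id_apply, E.nrmFin_const, Complex.norm_real,
      Real.norm_of_nonneg (inv_nonneg.2 hν.le), inv_mul_eq_div] at this
  · rw [← mul_div_assoc]
    exact opNorm_le_div hν hb (fun x => hle x) ⟨_, hx₀.le⟩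

theorem exists_inv_mul_le_and_le_mul {a A : ℕ → ℝ} {M : ℝ} (ha : ∀ n, 0 < n → 0 ≤ a n)
    (h : ∀ n, 0 < n → a n ≤ A n ∧ A n ≤ M * a n) :
    ∃ c > (0 : ℝ), ∀ n, 0 < n → c⁻¹ * a n ≤ A n ∧ A n ≤ c * a n := by
  refine ⟨max M 1, by positivity, fun n hn => ⟨?_, ?_⟩⟩
  · calc (max M 1)⁻¹ * a n ≤ 1 * a n :=
          mul_le_mul_of_nonneg_right (inv_le_one_of_one_le₀ (le_max_right _ _)) (ha n hn)
      _ ≤ A n := (one_mul (a n)).symm ▸ (h n hn).1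
  · exact (h n hn).2.trans (mul_le_mul_of_nonneg_right (le_max_left _ _) (ha n hn))

theorem div_le_and_le_mul_div_of_bounds {r b K A M M' : ℝ} (hr : 0 ≤ r) (hb : 0 < b)
    (hM : 0 ≤ M) (hK : b ≤ K ∧ K ≤ M' * b) (hA : r / b ≤ A ∧ A ≤ M * (r / b)) :
    r / K ≤ A ∧ A ≤ M * M' * (r / K) := by
  have hK₀ : 0 < K := hb.trans_le hK.1
  have hrb : r / b ≤ M' * (r / K) := by
    rw [mul_div_assoc', le_div_iff₀ hK₀, div_mul_eq_mul_div, div_le_iff₀ hb]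
    nlinarith [hK.2]
  refine ⟨(div_le_div_of_nonneg_left hr hb hK.1).trans hA.1, hA.2.trans ?_⟩
  rw [mul_assoc]
  exact mul_le_mul_of_nonneg_left hrb hM

theorem norm_section_into_lu_general (u : ℝ≥0∞) (hu1 : 1 ≤ u) (hu2 : u ≤ 2)
    (E : SymmSeqSpace) (hconv : pConvex E u) :
    (∃ c > (0:ℝ), ∀ n : ℕ, 0 < n →
      c⁻¹ * ((n : ℝ) ^ (1 / u.toReal) / E.nrmFin (fun _ : Fin n => (1:ℂ))) ≤
        opNorm (E.nrmFin (n := n)) (lunorm u) LinearMap.id ∧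
      opNorm (E.nrmFin (n := n)) (lunorm u) LinearMap.id ≤
        c * ((n : ℝ) ^ (1 / u.toReal) / E.nrmFin (fun _ : Fin n => (1:ℂ)))) ∧
    (qConcave E 2 → ∃ c > (0:ℝ), ∀ n : ℕ, 0 < n →
      c⁻¹ * ((n : ℝ) ^ (1 / u.toReal - 1 / 2) /
          opNorm (lunorm 2) (E.nrmFin (n := n)) LinearMap.id) ≤
        opNorm (E.nrmFin (n := n)) (lunorm u) LinearMap.id ∧
      opNorm (E.nrmFin (n := n)) (lunorm u) LinearMap.id ≤
        c * ((n : ℝ) ^ (1 / u.toReal - 1 / 2) /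
          opNorm (lunorm 2) (E.nrmFin (n := n)) LinearMap.id)) := by
  have hu : 0 < u.toReal := ENNReal.toReal_pos (zero_lt_one.trans_le hu1).ne'
    (ne_top_of_le_ne_top ENNReal.ofNat_ne_top hu2)
  obtain ⟨M, hM, hbounds⟩ := hconv.exists_opNorm_nrmFin_lunorm_bounds hu
  have he (n : ℕ) (hn : 0 < n) := E.nrmFin_one_pos hn
  refine ⟨exists_inv_mul_le_and_le_mul (fun n hn => (div_pos (by positivity) (he n hn)).le)
    hbounds, fun hconc₂ => ?_⟩
  obtain ⟨M₂, -, hbounds₂⟩ := hconc₂.exists_opNorm_lunorm_nrmFin_bounds (by norm_num)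
  simp only [ENNReal.toReal_ofNat] at hbounds₂
  have hb (n : ℕ) (hn : 0 < n) : 0 < E.nrmFin (fun _ : Fin n => (1:ℂ)) / (n : ℝ) ^ (1 / 2 : ℝ) :=
    div_pos (he n hn) (by positivity)
  refine exists_inv_mul_le_and_le_mul (M := M * M₂)
    (fun n hn => div_nonneg (by positivity) ((hb n hn).le.trans (hbounds₂ n hn).1)) fun n hn => ?_
  have hsplit : (n : ℝ) ^ (1 / u.toReal) / E.nrmFin (fun _ : Fin n => (1:ℂ)) =
      (n : ℝ) ^ (1 / u.toReal - 1 / 2) /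
        (E.nrmFin (fun _ : Fin n => (1:ℂ)) / (n : ℝ) ^ (1 / 2 : ℝ)) := by
    rw [div_div_eq_mul_div, ← Real.rpow_add (by positivity), sub_add_cancel]
  exact div_le_and_le_mul_div_of_bounds (by positivity) (hb n hn) hM.le (hbounds₂ n hn)
    (hsplit ▸ hbounds n hn)

/-- Lemma 7, formulas (14)/(15): for a u-convex and u'-concave symmetric Banach sequence
space `E` (`1 ≤ u ≤ 2`, `1/u + 1/u' = 1`), one has
`‖id : E_n → ℓ_u^n‖ ≍ n^{1/u} / ‖∑_{i≤n} e_i‖_{E_n}`, and if `E` is moreover 2-concave,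
also `‖id : E_n → ℓ_u^n‖ ≍ n^{1/u−1/2} / ‖id : ℓ_2^n → E_n‖`. -/
theorem norm_section_into_lu (u u' : ℝ≥0∞) (hu1 : 1 ≤ u) (hu2 : u ≤ 2) (hu'1 : 1 ≤ u')
    (hconj : 1 / u.toReal + 1 / u'.toReal = 1)
    (E : SymmSeqSpace) (hconv : pConvex E u) (hconc : qConcave E u') :
    (∃ c > (0:ℝ), ∀ n : ℕ, 0 < n →
      c⁻¹ * ((n : ℝ) ^ (1 / u.toReal) / E.nrmFin (fun _ : Fin n => (1:ℂ))) ≤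
        opNorm (E.nrmFin (n := n)) (lunorm u) LinearMap.id ∧
      opNorm (E.nrmFin (n := n)) (lunorm u) LinearMap.id ≤
        c * ((n : ℝ) ^ (1 / u.toReal) / E.nrmFin (fun _ : Fin n => (1:ℂ)))) ∧
    (qConcave E 2 → ∃ c > (0:ℝ), ∀ n : ℕ, 0 < n →
      c⁻¹ * ((n : ℝ) ^ (1 / u.toReal - 1 / 2) /
          opNorm (lunorm 2) (E.nrmFin (n := n)) LinearMap.id) ≤
        opNorm (E.nrmFin (n := n)) (lunorm u) LinearMap.id ∧
      opNorm (E.nrmFin (n := n)) (lunorm u) LinearMap.id ≤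
        c * ((n : ℝ) ^ (1 / u.toReal - 1 / 2) /
          opNorm (lunorm 2) (E.nrmFin (n := n)) LinearMap.id)) :=
  norm_section_into_lu_general u hu1 hu2 E hconv
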